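/- Let (r_j)_{j≥n} be independent exponential random variables where r_j has rate h(j) > 0 (so E[r_j] = 1/h(j)), with ∑_{j≥n} 1/h(j) < ∞, and set R = ∑_{j≥n} r_j and Z = ∑_{j≥n} 1/h(j)². Then for every s with 0 ≤ s ≤ h(j)/2 for all j ≥ n, both E[exp(s(R − E[R]))] ≤ exp(2s²Z) and E[exp(−s(R − E[R]))] ≤ exp(2s²Z). -/

import Mathlib

open MeasureTheory ProbabilityTheory

/-- `X` is exponentially distributed with rate `l` under `P`. -/
def IsExponentialRV {Ω : Type*} [MeasurableSpace Ω] (P : Measure Ω) (X : Ω → ℝ) (l : ℝ) : Prop :=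
  Measure.map X P = expMeasure l

open Real Set Filter Topology
open scoped ENNReal

/-! For a rate-`λ` exponential variable and `a ≤ λ / 2`, the moment generating function
`λ / (λ - a) = (1 - a / λ)⁻¹` is at most `exp (a / λ + 2 a² / λ²)`, because
`(1 - x) (1 + x + 2 x²) = 1 + x² (1 - 2 x) ≥ 1` for `x ≤ 1 / 2`. By independence, the moment
generating function of a partial sum of `R - E R` is at most
`exp (a (∑_{j<N} 1/λ_j - E R) + 2 a² ∑_{j<N} 1/λ_j²)`, which tends to `exp (2 a² Z)`. Since
`∑ E r_j < ∞` the partial sums converge to `R` almost surely, and Fatou's lemma passes the bound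
to the limit. -/

lemma inv_one_sub_le_exp_add_two_mul_sq {x : ℝ} (hx : x ≤ 1 / 2) :
    (1 - x)⁻¹ ≤ exp (x + 2 * x ^ 2) := by
  have h1x : 0 < 1 - x := by linarith
  rw [inv_le_iff_one_le_mul₀' h1x]
  calc (1 : ℝ) ≤ (1 - x) * (x + 2 * x ^ 2 + 1) := by nlinarith [sq_nonneg x]
    _ ≤ (1 - x) * exp (x + 2 * x ^ 2) := by gcongr; exact add_one_le_exp _

lemma div_sub_le_exp_of_le_half {l a : ℝ} (hl : 0 < l) (ha : a ≤ l / 2) :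
    l / (l - a) ≤ exp (a * (1 / l) + 2 * a ^ 2 * (1 / l ^ 2)) := by
  have hx : a / l ≤ 1 / 2 := by rw [div_le_iff₀ hl]; linarith
  convert inv_one_sub_le_exp_add_two_mul_sq hx using 2
  · field_simp
  · field_simp

lemma prod_div_sub_le_exp_sum {ι : Type*} (s : Finset ι) {l : ι → ℝ} {a : ℝ}
    (hl : ∀ i ∈ s, 0 < l i) (ha : ∀ i ∈ s, a ≤ l i / 2) :
    ∏ i ∈ s, l i / (l i - a) ≤ exp (a * ∑ i ∈ s, 1 / l i + 2 * a ^ 2 * ∑ i ∈ s, 1 / l i ^ 2) := by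
  rw [Finset.mul_sum, Finset.mul_sum, ← Finset.sum_add_distrib, exp_sum]
  refine Finset.prod_le_prod (fun i hi => div_nonneg (hl i hi).le ?_)
    fun i hi => div_sub_le_exp_of_le_half (hl i hi) (ha i hi)
  linarith [hl i hi, ha i hi]

lemma Summable.sq_of_nonneg {ι : Type*} {f : ι → ℝ} (hf : Summable f) (h0 : ∀ i, 0 ≤ f i) :
    Summable fun i => f i ^ 2 :=
  .of_nonneg_of_le (fun i => sq_nonneg _)
    (fun i => by rw [sq]; exact mul_le_mul_of_nonneg_right (hf.le_tsum i fun j _ => h0 j) (h0 i))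
    (hf.mul_left (∑' i, f i))

namespace ProbabilityTheory

lemma lintegral_expMeasure_eq {l : ℝ} {f : ℝ → ℝ≥0∞} (hf : Measurable f) :
    ∫⁻ x, f x ∂expMeasure l = ∫⁻ x in Ioi 0, ENNReal.ofReal (l * exp (-(l * x))) * f x := by
  have hpdf : (fun x => exponentialPDF l x * f x) =
      (Ici 0).indicator fun x => ENNReal.ofReal (l * exp (-(l * x))) * f x := by
    ext x
    by_cases hx : 0 ≤ x
    · simp [exponentialPDF_of_nonneg hx, hx]
    · simp [exponentialPDF_of_neg (not_le.1 hx), hx]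
  have hpdf_meas : Measurable (exponentialPDF l) := (measurable_exponentialPDFReal l).ennreal_ofReal
  rw [show expMeasure l = volume.withDensity (exponentialPDF l) from rfl,
    lintegral_withDensity_eq_lintegral_mul _ hpdf_meas hf]
  simp only [Pi.mul_apply]
  rw [hpdf, lintegral_indicator measurableSet_Ici, setLIntegral_congr Ioi_ae_eq_Ici.symm]

lemma lintegral_rpow_mul_exp_mul_expMeasure {l a p : ℝ} (hl : 0 < l) (ha : a < l) (hp : 0 < p) :
    ∫⁻ x, ENNReal.ofReal (x ^ (p - 1) * exp (a * x)) ∂expMeasure l =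
      ENNReal.ofReal (l * ((1 / (l - a)) ^ p * Gamma p)) := by
  have hla : 0 < l - a := by linarith
  have hint : IntegrableOn (fun x => x ^ (p - 1) * exp (-((l - a) * x))) (Ioi 0) :=
    Integrable.of_integral_ne_zero (by rw [integral_rpow_mul_exp_neg_mul_Ioi hp hla]; positivity)
  rw [lintegral_expMeasure_eq (by fun_prop), ← integral_rpow_mul_exp_neg_mul_Ioi hp hla,
    ← integral_const_mul, ofReal_integral_eq_lintegral_ofReal (hint.const_mul l)
      ((ae_restrict_iff' measurableSet_Ioi).2 (ae_of_all _ fun x (hx : 0 < x) => by positivity))]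
  refine setLIntegral_congr_fun measurableSet_Ioi fun x (hx : 0 < x) => ?_
  rw [← ENNReal.ofReal_mul (by positivity), mul_left_comm, mul_assoc, ← exp_add]
  ring_nf

lemma lintegral_exp_mul_expMeasure {l a : ℝ} (hl : 0 < l) (ha : a < l) :
    ∫⁻ x, ENNReal.ofReal (exp (a * x)) ∂expMeasure l = ENNReal.ofReal (l / (l - a)) := by
  simpa [div_eq_mul_inv] using lintegral_rpow_mul_exp_mul_expMeasure hl ha one_pos

lemma lintegral_ofReal_expMeasure {l : ℝ} (hl : 0 < l) :
    ∫⁻ x, ENNReal.ofReal x ∂expMeasure l = ENNReal.ofReal (1 / l) := by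
  have h := lintegral_rpow_mul_exp_mul_expMeasure (a := 0) hl hl two_pos
  norm_num at h
  rw [h]
  field_simp

end ProbabilityTheory

namespace IsExponentialRV

variable {Ω : Type*} [MeasurableSpace Ω] {P : Measure Ω} {X : Ω → ℝ} {l : ℝ}

lemma aemeasurable (hX : IsExponentialRV P X l) (hl : 0 < l) : AEMeasurable X P := by
  have := isProbabilityMeasure_expMeasure hl
  exact .of_map_ne_zero (hX ▸ IsProbabilityMeasure.ne_zero _)

lemma lintegral_comp (hX : IsExponentialRV P X l) (hl : 0 < l) {f : ℝ → ℝ≥0∞}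
    (hf : Measurable f) : ∫⁻ ω, f (X ω) ∂P = ∫⁻ x, f x ∂expMeasure l := by
  rw [← hX, lintegral_map' hf.aemeasurable (hX.aemeasurable hl)]

lemma ae_nonneg (hX : IsExponentialRV P X l) (hl : 0 < l) : 0 ≤ᵐ[P] X := by
  have h : ∀ᵐ x ∂expMeasure l, 0 ≤ x := by
    rw [ae_iff, show {x : ℝ | ¬0 ≤ x} = Iio 0 by ext; simp,
      show expMeasure l = volume.withDensity (exponentialPDF l) from rfl,
      withDensity_apply _ measurableSet_Iio]
    exact lintegral_exponentialPDF_of_nonpos le_rfl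
  rw [← hX] at h
  exact ae_of_ae_map (hX.aemeasurable hl) h

lemma mgf_eq (hX : IsExponentialRV P X l) (hl : 0 < l) {a : ℝ} (ha : a < l) :
    mgf X P a = l / (l - a) := by
  rw [mgf, integral_eq_lintegral_of_nonneg_ae (ae_of_all _ fun _ => (exp_pos _).le)
    ((hX.aemeasurable hl).const_mul a).exp.aestronglyMeasurable,
    hX.lintegral_comp hl (f := fun x => ENNReal.ofReal (exp (a * x))) (by fun_prop),
    lintegral_exp_mul_expMeasure hl ha, ENNReal.toReal_ofReal (div_nonneg hl.le (by linarith))]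

lemma lintegral_ofReal (hX : IsExponentialRV P X l) (hl : 0 < l) :
    ∫⁻ ω, ENNReal.ofReal (X ω) ∂P = ENNReal.ofReal (1 / l) := by
  rw [hX.lintegral_comp hl ENNReal.measurable_ofReal, lintegral_ofReal_expMeasure hl]

lemma lintegral_enorm (hX : IsExponentialRV P X l) (hl : 0 < l) :
    ∫⁻ ω, ‖X ω‖ₑ ∂P = ENNReal.ofReal (1 / l) := by
  rw [← hX.lintegral_ofReal hl]
  exact lintegral_congr_ae <| (hX.ae_nonneg hl).mono fun ω hω => Real.enorm_of_nonneg hω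

lemma integral_eq (hX : IsExponentialRV P X l) (hl : 0 < l) : ∫ ω, X ω ∂P = 1 / l := by
  rw [integral_eq_lintegral_of_nonneg_ae (hX.ae_nonneg hl)
    (hX.aemeasurable hl).aestronglyMeasurable, hX.lintegral_ofReal hl, ENNReal.toReal_ofReal (by positivity)]

end IsExponentialRV

lemma integral_le_of_tendsto_ae_of_integral_le {Ω : Type*} [MeasurableSpace Ω] {P : Measure Ω}
    {f : ℕ → Ω → ℝ} {g : Ω → ℝ} {b : ℕ → ℝ} {c : ℝ} (hf_int : ∀ N, Integrable (f N) P)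
    (hf_nonneg : ∀ N, 0 ≤ᵐ[P] f N) (hfg : ∀ᵐ ω ∂P, Tendsto (fun N => f N ω) atTop (𝓝 (g ω)))
    (hfb : ∀ N, ∫ ω, f N ω ∂P ≤ b N) (hbc : Tendsto b atTop (𝓝 c)) : ∫ ω, g ω ∂P ≤ c := by
  have hc : 0 ≤ c :=
    ge_of_tendsto' hbc fun N => (integral_nonneg_of_ae (hf_nonneg N)).trans (hfb N)
  have hg_nonneg : 0 ≤ᵐ[P] g := by
    filter_upwards [hfg, ae_all_iff.2 hf_nonneg] with ω hω h0 using ge_of_tendsto' hω h0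
  have hg_meas : AEStronglyMeasurable g P :=
    aestronglyMeasurable_of_tendsto_ae atTop (fun N => (hf_int N).1) hfg
  have hofReal := ENNReal.continuous_ofReal.tendsto
  rw [integral_eq_lintegral_of_nonneg_ae hg_nonneg hg_meas]
  refine ENNReal.toReal_le_of_le_ofReal hc ?_
  calc ∫⁻ ω, ENNReal.ofReal (g ω) ∂P
      = ∫⁻ ω, liminf (fun N => ENNReal.ofReal (f N ω)) atTop ∂P :=
        lintegral_congr_ae <| hfg.mono fun ω hω => ((hofReal _).comp hω).liminf_eq.symm
    _ ≤ liminf (fun N => ∫⁻ ω, ENNReal.ofReal (f N ω) ∂P) atTop :=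
        lintegral_liminf_le' fun N => (hf_int N).1.aemeasurable.ennreal_ofReal
    _ ≤ liminf (fun N => ENNReal.ofReal (b N)) atTop := by
        refine liminf_le_liminf (Eventually.of_forall fun N => ?_)
        rw [← ofReal_integral_eq_lintegral_ofReal (hf_int N) (hf_nonneg N)]
        exact ENNReal.ofReal_le_ofReal (hfb N)
    _ = ENNReal.ofReal c := ((hofReal c).comp hbc).liminf_eq

section IndependentExponentials

variable {Ω : Type*} [MeasurableSpace Ω] {P : Measure Ω} {X : ℕ → Ω → ℝ} {l : ℕ → ℝ}

lemma tsum_lintegral_enorm_ne_top (hX : ∀ j, IsExponentialRV P (X j) (l j)) (hl : ∀ j, 0 < l j)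
    (hsum : Summable fun j => 1 / l j) : ∑' j, ∫⁻ ω, ‖X j ω‖ₑ ∂P ≠ ∞ := by
  simp_rw [fun j => (hX j).lintegral_enorm (hl j)]
  rw [← ENNReal.ofReal_tsum_of_nonneg (fun j => (one_div_pos.2 (hl j)).le) hsum]
  exact ENNReal.ofReal_ne_top

lemma ae_summable_of_isExponentialRV (hX : ∀ j, IsExponentialRV P (X j) (l j))
    (hl : ∀ j, 0 < l j) (hsum : Summable fun j => 1 / l j) :
    ∀ᵐ ω ∂P, Summable fun j => X j ω := by
  have h := tsum_lintegral_enorm_ne_top hX hl hsum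
  simp_rw [← eLpNorm_one_eq_lintegral_enorm] at h
  filter_upwards [summable_norm_of_tsum_eLpNorm_ne_top le_rfl
    (fun j => ((hX j).aemeasurable (hl j)).aestronglyMeasurable) h] with ω hω using hω.of_norm

lemma integral_tsum_of_isExponentialRV (hX : ∀ j, IsExponentialRV P (X j) (l j))
    (hl : ∀ j, 0 < l j) (hsum : Summable fun j => 1 / l j) :
    ∫ ω, ∑' j, X j ω ∂P = ∑' j, 1 / l j := by
  rw [integral_tsum (fun j => ((hX j).aemeasurable (hl j)).aestronglyMeasurable)
    (tsum_lintegral_enorm_ne_top hX hl hsum)]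
  exact tsum_congr fun j => (hX j).integral_eq (hl j)

lemma integral_exp_mul_sum_of_isExponentialRV (hX : ∀ j, IsExponentialRV P (X j) (l j))
    (hl : ∀ j, 0 < l j) (hind : iIndepFun X P) (s : Finset ℕ) {a : ℝ} (ha : ∀ j, a < l j) :
    ∫ ω, exp (a * ∑ j ∈ s, X j ω) ∂P = ∏ j ∈ s, l j / (l j - a) := by
  have h := hind.mgf_sum₀ (t := a) (fun j => (hX j).aemeasurable (hl j)) s
  simp only [mgf, Finset.sum_apply] at h
  rw [h]
  exact Finset.prod_congr rfl fun j _ => (hX j).mgf_eq (hl j) (ha j)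

theorem integral_exp_mul_sub_integral_tsum_le (hX : ∀ j, IsExponentialRV P (X j) (l j))
    (hl : ∀ j, 0 < l j) (hind : iIndepFun X P) (hsum : Summable fun j => 1 / l j) {a : ℝ}
    (ha : ∀ j, a ≤ l j / 2) :
    ∫ ω, exp (a * (∑' j, X j ω - ∫ ω', ∑' j, X j ω' ∂P)) ∂P ≤
      exp (2 * a ^ 2 * ∑' j, 1 / l j ^ 2) := by
  rw [integral_tsum_of_isExponentialRV hX hl hsum]
  set m := ∑' j, 1 / l j
  have hla : ∀ j, a < l j := fun j => (ha j).trans_lt (by linarith [hl j])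
  have hsplit : ∀ N ω, exp (a * (∑ j ∈ Finset.range N, X j ω - m)) =
      exp (a * ∑ j ∈ Finset.range N, X j ω) * exp (-(a * m)) := fun N ω => by
    rw [← exp_add]; ring_nf
  have hmgf N := integral_exp_mul_sum_of_isExponentialRV hX hl hind (Finset.range N) hla
  have hsq : Summable fun j => 1 / l j ^ 2 := by
    simpa [div_pow] using hsum.sq_of_nonneg fun j => (one_div_pos.2 (hl j)).le
  refine integral_le_of_tendsto_ae_of_integral_le
    (f := fun N ω => exp (a * (∑ j ∈ Finset.range N, X j ω - m)))
    (b := fun N => exp (a * (∑ j ∈ Finset.range N, 1 / l j - m) +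
      2 * a ^ 2 * ∑ j ∈ Finset.range N, 1 / l j ^ 2))
    (fun N => ?_) (fun N => ae_of_all _ fun ω => (exp_pos _).le) ?_ (fun N => ?_) ?_
  · simp_rw [hsplit]
    exact (Integrable.of_integral_ne_zero (by rw [hmgf]; exact
      (Finset.prod_pos fun j _ => div_pos (hl j) (by linarith [hla j])).ne')).mul_const _
  · filter_upwards [ae_summable_of_isExponentialRV hX hl hsum] with ω hω
    exact ((hω.hasSum.tendsto_sum_nat.sub_const m).const_mul a).rexp
  · simp_rw [hsplit]
    rw [integral_mul_const, hmgf]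
    calc (∏ j ∈ Finset.range N, l j / (l j - a)) * exp (-(a * m))
        ≤ exp (a * ∑ j ∈ Finset.range N, 1 / l j +
            2 * a ^ 2 * ∑ j ∈ Finset.range N, 1 / l j ^ 2) * exp (-(a * m)) := by
          gcongr
          exact prod_div_sub_le_exp_sum _ (fun j _ => hl j) fun j _ => ha j
      _ = _ := by rw [← exp_add]; ring_nf
  · have hm : Tendsto (fun N => ∑ j ∈ Finset.range N, 1 / l j - m) atTop (𝓝 0) := by
      rw [← sub_self m]
      exact hsum.hasSum.tendsto_sum_nat.sub_const m
    have := (hm.const_mul a).add (hsq.hasSum.tendsto_sum_nat.const_mul (2 * a ^ 2))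
    simpa using this.rexp

end IndependentExponentials

theorem exponential_tail_sum_mgf_bound_general {Ω : Type*} [MeasurableSpace Ω] (P : Measure Ω)
    (n : ℕ) (h : ℕ → ℝ) (hh : ∀ j, n ≤ j → 0 < h j)
    (hsum : Summable fun j : ℕ => 1 / h (n + j))
    (r : ℕ → Ω → ℝ)
    (hindep : iIndepFun
      (fun j : {j : ℕ // n ≤ j} => r j) P)
    (hexp : ∀ j, n ≤ j → IsExponentialRV P (r j) (h j))
    (R : Ω → ℝ) (hR : ∀ ω, R ω = ∑' j : ℕ, r (n + j) ω)
    (Z : ℝ) (hZ : Z = ∑' j : ℕ, 1 / h (n + j) ^ 2)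
    (s : ℝ) (hs0 : 0 ≤ s) (hs : ∀ j, n ≤ j → s ≤ h j / 2) :
    (∫ ω, Real.exp (s * (R ω - ∫ ω', R ω' ∂P)) ∂P ≤ Real.exp (2 * s ^ 2 * Z)) ∧
      (∫ ω, Real.exp (-s * (R ω - ∫ ω', R ω' ∂P)) ∂P ≤ Real.exp (2 * s ^ 2 * Z)) := by
  have hl j : 0 < h (n + j) := hh _ (Nat.le_add_right n j)
  have hX j : IsExponentialRV P (r (n + j)) (h (n + j)) := hexp _ (Nat.le_add_right n j)
  have hind : iIndepFun (fun j => r (n + j)) P :=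
    hindep.precomp (g := fun j => ⟨n + j, Nat.le_add_right n j⟩) fun i j hij => by
      simpa using congrArg Subtype.val hij
  obtain rfl : R = fun ω => ∑' j, r (n + j) ω := funext hR
  subst hZ
  refine ⟨integral_exp_mul_sub_integral_tsum_le hX hl hind hsum fun j =>
    hs _ (Nat.le_add_right n j), ?_⟩
  simpa using integral_exp_mul_sub_integral_tsum_le hX hl hind hsum (a := -s) fun j => by
    linarith [hl j]

/-- Let `(r j)_{j ≥ n}` be independent exponential random variables with
rates `h j > 0` and `∑_{j≥n} 1/h j < ∞`.  Set `R = ∑_{j≥n} r j` and `Z = ∑_{j≥n} 1/h(j)²`.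
Then for every `s` with `0 ≤ s ≤ h j / 2` for all `j ≥ n`, both
`E[exp(s(R − E[R]))] ≤ exp(2s²Z)` and `E[exp(−s(R − E[R]))] ≤ exp(2s²Z)`. -/
theorem exponential_tail_sum_mgf_bound {Ω : Type*} [MeasurableSpace Ω] (P : Measure Ω)
    [IsProbabilityMeasure P] (n : ℕ) (h : ℕ → ℝ) (hh : ∀ j, n ≤ j → 0 < h j)
    (hsum : Summable fun j : ℕ => 1 / h (n + j))
    (r : ℕ → Ω → ℝ) (hmeas : ∀ j, Measurable (r j))
    (hindep : iIndepFun
      (fun j : {j : ℕ // n ≤ j} => r j) P)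
    (hexp : ∀ j, n ≤ j → IsExponentialRV P (r j) (h j))
    (R : Ω → ℝ) (hR : ∀ ω, R ω = ∑' j : ℕ, r (n + j) ω)
    (Z : ℝ) (hZ : Z = ∑' j : ℕ, 1 / h (n + j) ^ 2)
    (s : ℝ) (hs0 : 0 ≤ s) (hs : ∀ j, n ≤ j → s ≤ h j / 2) :
    (∫ ω, Real.exp (s * (R ω - ∫ ω', R ω' ∂P)) ∂P ≤ Real.exp (2 * s ^ 2 * Z)) ∧
      (∫ ω, Real.exp (-s * (R ω - ∫ ω', R ω' ∂P)) ∂P ≤ Real.exp (2 * s ^ 2 * Z)) :=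
  exponential_tail_sum_mgf_bound_general P n h hh hsum r hindep hexp R hR Z hZ s hs0 hs
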